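/- Let B be a matroid on a finite set X. Suppose C ⊆ X and a, z, d are three distinct elements of X \ C such that C ∪ {a,z}, C ∪ {a,d}, and C ∪ {z,d} are all bases (a triangle). If e ∈ U(C ∪ {z}), then e ∈ U(C ∪ {a}) or e ∈ U(C ∪ {d}), where U(D) = {x ∉ D : D ∪ {x} is a basis}. -/

import Mathlib

open Finset

variable {α : Type*}

def ExchangeProperty [DecidableEq α] (B : Finset (Finset α)) : Prop :=
  ∀ B1 ∈ B, ∀ B2 ∈ B, ∀ x ∈ B1 \ B2, ∃ y ∈ B2 \ B1, insert y (B1.erase x) ∈ B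

def IsMatroid [DecidableEq α] (B : Finset (Finset α)) : Prop :=
  B.Nonempty ∧ ExchangeProperty B

def AlmostBasis [DecidableEq α] (B : Finset (Finset α)) (A : Finset α) : Prop :=
  ∃ B0 ∈ B, ∃ x ∈ B0, A = B0.erase x

def OverBasis [DecidableEq α] (B : Finset (Finset α)) (Q : Finset α) : Prop :=
  ∃ B0 ∈ B, ∃ y, y ∉ B0 ∧ Q = insert y B0

def Indep [DecidableEq α] (B : Finset (Finset α)) (S : Finset α) : Prop :=
  ∃ B0 ∈ B, S ⊆ B0

def IsCircuit [DecidableEq α] (B : Finset (Finset α)) (C : Finset α) : Prop :=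
  ¬ Indep B C ∧ ∀ x ∈ C, Indep B (C.erase x)

def USet [DecidableEq α] [Fintype α] (B : Finset (Finset α)) (D : Finset α) : Finset α :=
  Finset.univ.filter fun x => x ∉ D ∧ insert x D ∈ B

def CSet [DecidableEq α] (B : Finset (Finset α)) (Q : Finset α) : Finset α :=
  Q.filter fun x => Q.erase x ∈ B

def IsLinking [DecidableEq α] (B Bs : Finset (Finset α)) (L : Finset α → Finset α) : Prop :=
  Set.BijOn L ↑B ↑Bs ∧
  ∀ B0 ∈ B, ∀ a b : α, a ≠ b →
    (B0.image (Equiv.swap a b) ∈ B →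
      (L B0).image (Equiv.swap a b) ∈ Bs ∧
      (L B0).image (Equiv.swap a b) = L (B0.image (Equiv.swap a b))) ∧
    ((L B0).image (Equiv.swap a b) ∈ Bs →
      B0.image (Equiv.swap a b) ∈ B ∧
      (L B0).image (Equiv.swap a b) = L (B0.image (Equiv.swap a b)))

/-! Exchange `z` out of the basis `C ∪ {z, e}` against the basis `C ∪ {a, d}`: the element
brought in lies in `{a, d} \ C`, so it is `a` or `d`. -/

theorem mem_USet [DecidableEq α] [Fintype α] {B : Finset (Finset α)} {D : Finset α} {x : α} :
    x ∈ USet B D ↔ x ∉ D ∧ insert x D ∈ B := by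
  simp [USet]

theorem mem_USet_insert_swap [DecidableEq α] [Fintype α] {B : Finset (Finset α)} {C : Finset α}
    {x y : α} (h : x ∈ USet B (insert y C)) (hy : y ∉ insert x C) : y ∈ USet B (insert x C) :=
  mem_USet.2 ⟨hy, Finset.insert_comm x y C ▸ (mem_USet.1 h).2⟩

theorem ExchangeProperty.exists_mem_sdiff_mem_USet [DecidableEq α] [Fintype α]
    {B : Finset (Finset α)} (hB : ExchangeProperty B) {D B₂ : Finset α} {z : α}
    (hz : z ∈ USet B D) (hB₂ : B₂ ∈ B) (hzB₂ : z ∉ B₂) : ∃ y ∈ B₂ \ D, y ∈ USet B D := by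
  obtain ⟨hzD, hzB⟩ := mem_USet.1 hz
  obtain ⟨y, hy, hyB⟩ := hB _ hzB _ hB₂ z (mem_sdiff.2 ⟨mem_insert_self z D, hzB₂⟩)
  rw [erase_insert hzD] at hyB
  obtain ⟨hyB₂, hyzD⟩ := mem_sdiff.1 hy
  have hyD : y ∉ D := fun h => hyzD (mem_insert_of_mem h)
  exact ⟨y, mem_sdiff.2 ⟨hyB₂, hyD⟩, mem_USet.2 ⟨hyD, hyB⟩⟩

theorem triangle_lemma_general [DecidableEq α] [Fintype α] (B : Finset (Finset α))
    (hB : IsMatroid B) (C : Finset α) (a z d : α)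
    (haz : a ≠ z) (hzd : z ≠ d)
    (hzC : z ∉ C)
    (h2 : insert a (insert d C) ∈ B)
    (e : α) (he : e ∈ USet B (insert z C)) :
    e ∈ USet B (insert a C) ∨ e ∈ USet B (insert d C) := by
  obtain ⟨hez, heC⟩ : e ≠ z ∧ e ∉ C := by simpa using (mem_USet.1 he).1
  have hz : z ∈ USet B (insert e C) := mem_USet_insert_swap he (by simp [hez.symm, hzC])
  obtain ⟨y, hy, hyU⟩ :=
    hB.2.exists_mem_sdiff_mem_USet hz h2 (by simp [haz.symm, hzd, hzC])
  simp only [mem_sdiff, mem_insert, not_or] at hy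
  obtain ⟨hyad, hye, hyC⟩ := hy
  have he' : e ∈ USet B (insert y C) := mem_USet_insert_swap hyU (by simp [Ne.symm hye, heC])
  rcases hyad with rfl | rfl | hyC'
  · exact Or.inl he'
  · exact Or.inr he'
  · exact absurd hyC' hyC

theorem triangle_lemma [DecidableEq α] [Fintype α] (B : Finset (Finset α))
    (hB : IsMatroid B) (C : Finset α) (a z d : α)
    (haz : a ≠ z) (had : a ≠ d) (hzd : z ≠ d)
    (haC : a ∉ C) (hzC : z ∉ C) (hdC : d ∉ C)
    (h1 : insert a (insert z C) ∈ B)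
    (h2 : insert a (insert d C) ∈ B)
    (h3 : insert z (insert d C) ∈ B)
    (e : α) (he : e ∈ USet B (insert z C)) :
    e ∈ USet B (insert a C) ∨ e ∈ USet B (insert d C) :=
  triangle_lemma_general B hB C a z d haz hzd hzC h2 e he
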